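/- Let u : ℝ → ℝ be of class C⁶, fix x ∈ ℝ, and let ν ∈ ℝ. Then the five-point diffusion scheme satisfies −ν·(−u(x−2h) + 28·u(x−h) − 54·u(x) + 28·u(x+h) − u(x+2h))/(24·h²) = −ν·u''(x) − (ν/24)·u''''(x)·h² + O(h⁴) as h → 0⁺. -/

import Mathlib

open Asymptotics Filter Set MeasureTheory
open scoped Nat Topology

/-!
Expand `u(x + c h)` to order six by Taylor's theorem, with remainder `o(h⁶)`, for
`c = ±1, ±2`. The weights `(-1, 28, -54, 28, -1)` annihilate the moments of odd and of zeroth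
order and have moments `48, 24, -72` of orders `2, 4, 6`, so the stencil is
`24 u'' h² + u'''' h⁴ - u⁽⁶⁾ h⁶ / 10 + o(h⁶)`. Dividing by `24 h²` leaves, beyond the two claimed
terms, `ν u⁽⁶⁾ h⁴ / 240 + o(h⁴) = O(h⁴)`.
-/

theorem ContDiff.taylor_isLittleO_comp_mul {E : Type*} [NormedAddCommGroup E] [NormedSpace ℝ E]
    {f : ℝ → E} {n : ℕ} (hf : ContDiff ℝ n f) (x c : ℝ) :
    (fun h : ℝ => f (x + c * h) -
        ∑ k ∈ Finset.range (n + 1), ((k ! : ℝ)⁻¹ * (c * h) ^ k) • iteratedDeriv k f x)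
      =o[𝓝 0] fun h => h ^ n := by
  have hlin : Tendsto (fun h : ℝ => x + c * h) (𝓝 0) (𝓝 x) :=
    (by fun_prop : Continuous fun h : ℝ => x + c * h).tendsto' 0 x (by simp)
  refine (((taylor_isLittleO_univ hf).comp_tendsto hlin).congr_left fun h => ?_).trans_isBigO ?_
  · simp [taylor_within_apply, iteratedDerivWithin_univ]
  · simpa [Function.comp_def, mul_pow] using isBigO_const_mul_self (c ^ n) (fun h : ℝ => h ^ n) _

theorem Asymptotics.IsLittleO.div_pow_nhdsNE {g : ℝ → ℝ} {m k : ℕ}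
    (hg : g =o[𝓝 0] fun h => h ^ (m + k)) :
    (fun h => g h / h ^ k) =o[𝓝[≠] 0] fun h => h ^ m := by
  refine ((hg.mono nhdsWithin_le_nhds).mul_isBigO (isBigO_refl (fun h : ℝ => (h ^ k)⁻¹) _)
    |>.congr' (by simp [div_eq_mul_inv]) ?_)
  filter_upwards [self_mem_nhdsWithin] with h hh
  rw [pow_add, mul_inv_cancel_right₀ (pow_ne_zero _ hh)]

theorem fivePointStencil_sub_taylor_isLittleO {u : ℝ → ℝ} (hu : ContDiff ℝ 6 u) (x : ℝ) :
    (fun h : ℝ => (-u (x - 2 * h) + 28 * u (x - h) - 54 * u x + 28 * u (x + h) - u (x + 2 * h))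
        - (24 * iteratedDeriv 2 u x * h ^ 2 + iteratedDeriv 4 u x * h ^ 4
          - iteratedDeriv 6 u x * h ^ 6 / 10))
      =o[𝓝 0] fun h => h ^ 6 := by
  have hR := hu.taylor_isLittleO_comp_mul (n := 6) x
  refine ((((hR (-2)).neg_left.add ((hR (-1)).const_mul_left 28)).add
    ((hR 1).const_mul_left 28)).sub (hR 2)).congr_left fun h => ?_
  simp only [Finset.sum_range_succ, Finset.sum_range_zero, smul_eq_mul, iteratedDeriv_zero,
    Nat.factorial]
  push_cast
  -- `ring_nf`, unlike `ring`, also identifies the arguments `x + -2 * h` and `x - 2 * h` of `u`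
  ring_nf

theorem quick_five_point_diffusion_expansion (u : ℝ → ℝ) (hu : ContDiff ℝ 6 u)
    (x ν : ℝ) :
    (fun h : ℝ =>
        -ν * (-u (x - 2 * h) + 28 * u (x - h) - 54 * u x + 28 * u (x + h) - u (x + 2 * h))
            / (24 * h ^ 2)
        - (-ν * iteratedDeriv 2 u x - (ν / 24) * iteratedDeriv 4 u x * h ^ 2))
      =O[nhdsWithin 0 (Set.Ioi 0)] fun h : ℝ => h ^ 4 := by
  have hrem := (fivePointStencil_sub_taylor_isLittleO hu x).div_pow_nhdsNE (m := 4) (k := 2)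
  refine (((hrem.isBigO.const_mul_left (-ν / 24)).add
      (isBigO_const_mul_self (ν / 240 * iteratedDeriv 6 u x) (fun h : ℝ => h ^ 4) _)).mono
      (nhdsWithin_mono 0 fun h (hh : 0 < h) => hh.ne')).congr' ?_ EventuallyEq.rfl
  filter_upwards [self_mem_nhdsWithin] with h (hh : 0 < h)
  field_simp
  ring
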